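/- arXiv:cs/0605096 — 5 statements merged into one kernel-verified Lean document; each statement's English description precedes it below -/
import Mathlib

section
/- Every rotation of a lexicographically minimal word of prime length that is not a power of a single letter yields a word whose set of rotations is the same as that of the original word; in particular, the minimal rotation of such a word is primitive. -/
/-!
Rotation is a group action of `ℤ / |w|`, so the rotation class of a word is the class of any of
its rotations. If a word of prime length `p` is the `k`-th power of `u`, then `k * |u| = p`
forces `k = 1` or `|u| = 1`, and the latter makes the word a power of a single letter.
-/

namespace List

variable {α : Type*}

theorem exists_lt_length_rotate_eq_iff_isRotated {l v : List α} (hl : l ≠ []) :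
    (∃ i < l.length, v = l.rotate i) ↔ l ~r v := by
  constructor
  · rintro ⟨i, -, rfl⟩
    exact ⟨i, rfl⟩
  · rintro ⟨n, rfl⟩
    exact ⟨n % l.length, Nat.mod_lt _ (length_pos_iff.mpr hl), (rotate_mod l n).symm⟩

theorem exists_lt_length_rotate_rotate_eq_iff (l : List α) (j : ℕ) (v : List α) :
    (∃ i < l.length, v = (l.rotate j).rotate i) ↔ ∃ i < l.length, v = l.rotate i := by
  rcases eq_or_ne l [] with rfl | hl
  · simp
  have hrot : l.rotate j ~r l := IsRotated.symm ⟨j, rfl⟩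
  have hl' : l.rotate j ≠ [] := by simpa [rotate_eq_nil_iff] using hl
  rw [← length_rotate l j, exists_lt_length_rotate_eq_iff_isRotated hl', length_rotate,
    exists_lt_length_rotate_eq_iff_isRotated hl]
  exact ⟨hrot.symm.trans, hrot.trans⟩

theorem exists_eq_replicate_of_eq_flatten_replicate {w u : List α} {k : ℕ}
    (hp : w.length.Prime) (hw : w = (replicate k u).flatten) (hk : k ≠ 1) :
    ∃ a, w = replicate w.length a := by
  have hlen : w.length = k * u.length := by simp [hw]
  have hkp : k = w.length :=
    (hp.eq_one_or_self_of_dvd k ⟨u.length, hlen⟩).resolve_left hk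
  have hu : u.length = 1 := by
    rw [← hkp] at hlen
    exact Nat.eq_of_mul_eq_mul_left (hkp ▸ hp.pos) (hlen.symm.trans (mul_one k).symm)
  obtain ⟨a, rfl⟩ := length_eq_one_iff.mp hu
  exact ⟨a, hw.trans (by rw [flatten_replicate_singleton, hkp])⟩

end List

theorem minimal_word_rotations_and_primitive_general {α : Type*} [LinearOrder α]
    (w : List α) (n : ℕ) (hn : w.length = n) (hp : n.Prime)
    (hconst : ¬ ∃ a : α, w = List.replicate n a) :
    (∀ j, ∀ v : List α,
      ((∃ i, i < w.length ∧ v = (w.rotate j).rotate i) ↔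
       (∃ i, i < w.length ∧ v = w.rotate i))) ∧
    (∀ (u : List α) (k : ℕ), w = (List.replicate k u).flatten → k = 1) := by
  subst hn
  refine ⟨List.exists_lt_length_rotate_rotate_eq_iff w, fun u k hw => ?_⟩
  by_contra hk
  exact hconst (List.exists_eq_replicate_of_eq_flatten_replicate hp hw hk)

/-- For a lexicographically minimal word of prime length that is not a
power of a single letter: every rotation has the same set of rotations as the
original word, and the word is primitive. -/
theorem minimal_word_rotations_and_primitive {α : Type*} [LinearOrder α]
    (w : List α) (n : ℕ) (hn : w.length = n) (hp : n.Prime)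
    (hconst : ¬ ∃ a : α, w = List.replicate n a)
    (hmin : ∀ j, j < w.length →
      (List.Lex (· < ·) w (w.rotate j) ∨ w = w.rotate j)) :
    (∀ j, ∀ v : List α,
      ((∃ i, i < w.length ∧ v = (w.rotate j).rotate i) ↔
       (∃ i, i < w.length ∧ v = w.rotate i))) ∧
    (∀ (u : List α) (k : ℕ), w = (List.replicate k u).flatten → k = 1) :=
  minimal_word_rotations_and_primitive_general w n hn hp hconst
end

section
/- If a word w of prime length n is not a power of a single letter, then the lexicographically smallest rotation of w is a Lyndon word. -/
/-! A word fixed by a rotation by `k` is fixed by the rotation by `gcd k n`, where `n` is its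
length; when `n` is prime and `0 < k < n` this is the rotation by one letter, so the word is a
power of a single letter. Hence a word of prime length that is not such a power differs from
all its nontrivial rotations, and its least rotation is strictly below all the others. -/

/-- A word is a Lyndon word iff it is nonempty and strictly lexicographically
smaller than each of its nontrivial rotations. -/
def IsLyndon {α : Type*} [LinearOrder α] (w : List α) : Prop :=
  w ≠ [] ∧ ∀ j, 0 < j → j < w.length → List.Lex (· < ·) w (w.rotate j)

namespace List

variable {α : Type*}

theorem iterate_rotate_one (l : List α) (k : ℕ) : (rotate · 1)^[k] l = l.rotate k := by
  induction k with
  | zero => simp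
  | succ k ih => rw [Function.iterate_succ_apply', ih, rotate_rotate]

theorem isPeriodicPt_rotate_one_iff {l : List α} {k : ℕ} :
    Function.IsPeriodicPt (rotate · 1) k l ↔ l.rotate k = l := by
  rw [Function.IsPeriodicPt, Function.IsFixedPt, iterate_rotate_one]

theorem rotate_gcd_length_eq_self {l : List α} {k : ℕ} (h : l.rotate k = l) :
    l.rotate (k.gcd l.length) = l :=
  isPeriodicPt_rotate_one_iff.1 <|
    (isPeriodicPt_rotate_one_iff.2 h).gcd (isPeriodicPt_rotate_one_iff.2 l.rotate_length)

theorem eq_replicate_of_rotate_eq_self_of_prime {l : List α} (hp : l.length.Prime) {k : ℕ}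
    (hk₀ : 0 < k) (hk : k < l.length) (h : l.rotate k = l) :
    ∃ a, l = replicate l.length a := by
  have hne : l ≠ [] := ne_nil_of_length_pos hp.pos
  have : Nonempty α := ⟨l.head hne⟩
  have hcop : k.gcd l.length = 1 :=
    Nat.Coprime.symm <| hp.coprime_iff_not_dvd.2 <| Nat.not_dvd_of_pos_of_lt hk₀ hk
  exact rotate_one_eq_self_iff_eq_replicate.1 (hcop ▸ rotate_gcd_length_eq_self h)

end List

open List

theorem isLyndon_of_forall_lex_rotate {α : Type*} [LinearOrder α] {v : List α} (hne : v ≠ [])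
    (hmin : ∀ k, k < v.length → Lex (· < ·) v (v.rotate k) ∨ v = v.rotate k)
    (haper : ∀ k, 0 < k → k < v.length → v.rotate k ≠ v) :
    IsLyndon v :=
  ⟨hne, fun k hk₀ hk => (hmin k hk).resolve_right fun h => haper k hk₀ hk h.symm⟩

/-- If a word of prime length is not a power of a single letter, then
its lexicographically smallest rotation is a Lyndon word. -/
theorem min_rotation_isLyndon {α : Type*} [LinearOrder α]
    (w : List α) (n : ℕ) (hn : w.length = n) (hp : n.Prime)
    (hconst : ¬ ∃ a : α, w = List.replicate n a) :
    ∀ j, j < w.length →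
      (∀ i, i < w.length →
        (List.Lex (· < ·) (w.rotate j) (w.rotate i) ∨ w.rotate j = w.rotate i)) →
      IsLyndon (w.rotate j) := by
  intro j _ hmin
  have hlen : (w.rotate j).length = n := by rw [length_rotate, hn]
  have hne : w.rotate j ≠ [] := ne_nil_of_length_pos (hlen ▸ hp.pos)
  refine isLyndon_of_forall_lex_rotate hne (fun k _ => ?_) fun k hk₀ hk hper => hconst ?_
  · rw [rotate_rotate, ← rotate_mod w (j + k)]
    exact hmin _ (Nat.mod_lt _ (hn ▸ hp.pos))
  · obtain ⟨a, ha⟩ := eq_replicate_of_rotate_eq_self_of_prime (hlen ▸ hp) hk₀ hk hper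
    refine ⟨a, ?_⟩
    rw [rotate_eq_iff, hlen] at ha
    rw [ha, rotate_replicate]
end

section
/- A nonempty word w has at most one rotation that is a Lyndon word; i.e., if R_i(w) and R_j(w) are both Lyndon words with 1 ≤ i, j ≤ |w|, then R_i(w) = R_j(w). -/
open List

namespace IsLyndon

variable {α : Type*} [LinearOrder α] {u v : List α}

theorem lex_of_isRotated (hu : IsLyndon u) (h : u ~r v) (hne : u ≠ v) :
    List.Lex (· < ·) u v := by
  obtain ⟨k, rfl⟩ := h
  rw [← rotate_mod] at hne ⊢
  have hk : k % u.length ≠ 0 := fun hk => hne (by rw [hk, rotate_zero])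
  exact hu.2 _ (Nat.pos_of_ne_zero hk) (Nat.mod_lt _ (length_pos_iff.mpr hu.1))

theorem eq_of_isRotated (hu : IsLyndon u) (hv : IsLyndon v) (h : u ~r v) : u = v := by
  by_contra hne
  exact asymm (r := List.Lex (· < ·))
    (hu.lex_of_isRotated h hne) (hv.lex_of_isRotated h.symm (Ne.symm hne))

end IsLyndon

theorem lyndon_rotation_unique_general {α : Type*} [LinearOrder α]
    (w : List α) (i j : ℕ)
    (hLi : IsLyndon (w.rotate i)) (hLj : IsLyndon (w.rotate j)) :
    w.rotate i = w.rotate j :=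
  hLi.eq_of_isRotated hLj ((IsRotated.forall w i).trans (IsRotated.forall w j).symm)

/-- A nonempty word has at most one rotation that is a Lyndon word. -/
theorem lyndon_rotation_unique {α : Type*} [LinearOrder α]
    (w : List α) (hw : w ≠ []) (i j : ℕ)
    (hi : i < w.length) (hj : j < w.length)
    (hLi : IsLyndon (w.rotate i)) (hLj : IsLyndon (w.rotate j)) :
    w.rotate i = w.rotate j :=
  lyndon_rotation_unique_general w i j hLi hLj
end

section
/- Let w be a word of prime length n that is not a power of a single letter, and let w̄ denote its reversal. Then the unique rotation of w that is a Lyndon word and the unique rotation of w̄ that is a Lyndon word start at distinct positions of the underlying circular word; i.e., if R_i(w) is a Lyndon word and R_j(w̄) is a Lyndon word where w̄ is the reversal of w, then the corresponding starting indices on the circular sequence are different. Equivalently, there is no word u of length ≥ 2 such that both u and its reversal are Lyndon words. -/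
theorem List.not_append_singleton_lt_cons {α : Type*} [LinearOrder α] {a : α} :
    ∀ {s : List α}, (∀ c ∈ s, a ≤ c) → ¬ s ++ [a] < a :: s
  | [], _ => lt_irrefl [a]
  | c :: s, hs => fun h => by
    rcases List.cons_lt_cons_iff.mp h with hca | ⟨rfl, hlt⟩
    · exact (hs c List.mem_cons_self).not_gt hca
    · exact not_append_singleton_lt_cons (fun d hd => hs d (List.mem_cons_of_mem _ hd)) hlt

namespace IsLyndon

variable {α : Type*} [LinearOrder α] {u : List α}

theorem head_le (hu : IsLyndon u) {c : α} (hc : c ∈ u) : u.head hu.1 ≤ c := by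
  obtain ⟨k, hk, rfl⟩ := List.mem_iff_getElem.mp hc
  obtain rfl | hk0 := k.eq_zero_or_pos
  · exact (List.getElem_zero hk).ge
  obtain ⟨x, t, rfl⟩ := List.exists_cons_of_ne_nil hu.1
  have hlex := hu.2 k hk0 hk
  rw [List.rotate_eq_drop_append_take hk.le, List.drop_eq_getElem_cons hk] at hlex
  rcases List.cons_lt_cons_iff.mp hlex with hlt | ⟨heq, -⟩
  · exact hlt.le
  · exact heq.le

theorem head_lt_getLast (hu : IsLyndon u) (h2 : 2 ≤ u.length) : u.head hu.1 < u.getLast hu.1 := by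
  refine (hu.head_le (List.getLast_mem hu.1)).lt_of_ne fun heq => ?_
  obtain ⟨a, t, rfl⟩ := List.exists_cons_of_ne_nil hu.1
  obtain ⟨s, b, rfl⟩ := (List.eq_nil_or_concat' t).resolve_left (by rintro rfl; simp at h2)
  rw [List.head_cons, List.getLast_cons (by simp), List.getLast_append_singleton] at heq
  subst heq
  have hlex := hu.2 (a :: s).length (by simp) (by simp)
  rw [← List.cons_append, List.rotate_append_length_eq] at hlex
  have hmin : ∀ c ∈ s, a ≤ c := fun c hc => hu.head_le (by simp [hc])
  exact List.not_append_singleton_lt_cons hmin (List.lex_cons_iff.mp hlex)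

theorem not_reverse (hu : IsLyndon u) (h2 : 2 ≤ u.length) : ¬ IsLyndon u.reverse := fun hur => by
  have := hur.head_lt_getLast (by simpa using h2)
  rw [List.head_reverse, List.getLast_reverse] at this
  exact (hu.head_lt_getLast h2).asymm this

end IsLyndon

theorem lyndon_rotation_of_reverse_distinct_general {α : Type*} [LinearOrder α]
    (w : List α) (n : ℕ) (hn : w.length = n) (hp : n.Prime)
    (i j : ℕ)
    (hLi : IsLyndon (w.rotate i)) (hLj : IsLyndon (w.reverse.rotate j)) :
    (w.rotate i).reverse ≠ w.reverse.rotate j := by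
  intro heq
  rw [← heq] at hLj
  exact hLi.not_reverse (by simpa [hn] using hp.two_le) hLj

/-- For a word of prime length not all of whose letters are equal,
the unique Lyndon rotation of w and the unique Lyndon rotation of its reversal
start at distinct positions of the underlying circular word: the reverse of the
Lyndon rotation of w is not the Lyndon rotation of the reversal. -/
theorem lyndon_rotation_of_reverse_distinct {α : Type*} [LinearOrder α]
    (w : List α) (n : ℕ) (hn : w.length = n) (hp : n.Prime)
    (hconst : ¬ ∃ a : α, w = List.replicate n a)
    (i j : ℕ) (hi : i < n) (hj : j < n)
    (hLi : IsLyndon (w.rotate i)) (hLj : IsLyndon (w.reverse.rotate j)) :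
    (w.rotate i).reverse ≠ w.reverse.rotate j :=
  lyndon_rotation_of_reverse_distinct_general w n hn hp i j hLi hLj
end

section
/- A word w is a Lyndon word (strictly smaller than all its nontrivial rotations) if and only if w is nonempty and strictly smaller in lexicographic order than each of its proper nonempty suffixes. -/
/-!
Since `w.rotate j = w.drop j ++ w.take j`, a word below the suffix `w.drop j` is below the
rotation, which gives one direction. Conversely, `w < w.drop j ++ w.take j` forces either
`w < w.drop j` or that `w.drop j` is a prefix of `w`. The latter is impossible for a Lyndon
word: writing `w = x ++ y = y ++ z` with `y = w.drop j`, the inequality `w < y ++ x` cancels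
to `z < x`, whence the rotation `z ++ y` lies below `x ++ y = w`.
-/

namespace List

variable {α : Type*} {r : α → α → Prop}

theorem Lex.lex_or_isPrefix_of_lex_append :
    ∀ {s t u : List α}, Lex r s (t ++ u) → Lex r s t ∨ t <+: s
  | _, [], _, _ => .inr nil_prefix
  | [], _ :: _, _, _ => .inl .nil
  | _ :: _, _ :: _, _, .rel h => .inl (.rel h)
  | _ :: _, _ :: _, _, .cons h =>
    (lex_or_isPrefix_of_lex_append h).imp .cons (cons_prefix_cons.mpr ⟨rfl, ·⟩)

theorem lex_append_left_iff [Std.Irrefl r] :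
    ∀ (t : List α) {s u : List α}, Lex r (t ++ s) (t ++ u) ↔ Lex r s u
  | [], _, _ => .rfl
  | _ :: t, _, _ => lex_cons_iff.trans (lex_append_left_iff t)

theorem Lex.append_of_length_le {s t : List α} (u v : List α) (h : Lex r s t)
    (hl : t.length ≤ s.length) : Lex r (s ++ u) (t ++ v) := by
  induction h with
  | nil => simp at hl
  | rel hr => exact .rel hr
  | cons _ ih => exact .cons (ih (by simpa using hl))

theorem not_lex_of_append_eq_append [Std.Asymm r] {x y z : List α} (h : x ++ y = y ++ z)
    (hyx : Lex r (x ++ y) (y ++ x)) : ¬ Lex r (x ++ y) (z ++ y) := by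
  intro hzy
  have hlen : x.length = z.length := by
    have := congrArg length h
    simp only [length_append] at this
    omega
  have hzx : Lex r z x := (lex_append_left_iff y).mp (h ▸ hyx)
  exact asymm hzy (hzx.append_of_length_le y y hlen.le)

end List

theorem IsLyndon.not_drop_prefix {α : Type*} [LinearOrder α] {w : List α} (hw : IsLyndon w)
    {j : ℕ} (hj : 0 < j) (hjw : j < w.length) : ¬ w.drop j <+: w := by
  rintro ⟨z, hz⟩
  set x := w.take j
  set y := w.drop j
  have hxy : x ++ y = w := List.take_append_drop j w
  have hylen : y.length = w.length - j := List.length_drop ..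
  have hyx : List.Lex (· < ·) w (y ++ x) :=
    List.rotate_eq_drop_append_take hjw.le ▸ hw.2 j hj hjw
  have hzy := hw.2 y.length (by omega) (by omega)
  have hrot : w.rotate y.length = z ++ y := hz ▸ List.rotate_append_length_eq y z
  rw [hrot] at hzy
  rw [← hxy] at hyx hzy hz
  exact List.not_lex_of_append_eq_append hz.symm hyx hzy

/-- A word is a Lyndon word (smaller than all nontrivial rotations)
iff it is nonempty and strictly smaller than each of its proper nonempty suffixes. -/
theorem lyndon_iff_lt_suffixes {α : Type*} [LinearOrder α] (w : List α) :
    IsLyndon w ↔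
      (w ≠ [] ∧ ∀ j, 0 < j → j < w.length → List.Lex (· < ·) w (w.drop j)) := by
  refine ⟨fun hw => ⟨hw.1, fun j hj hjw => ?_⟩,
    fun ⟨hne, h⟩ => ⟨hne, fun j hj hjw => ?_⟩⟩
  · have hrot := hw.2 j hj hjw
    rw [List.rotate_eq_drop_append_take hjw.le] at hrot
    exact hrot.lex_or_isPrefix_of_lex_append.resolve_right (hw.not_drop_prefix hj hjw)
  · rw [List.rotate_eq_drop_append_take hjw.le]
    exact (h j hj hjw).append_right _ _
end
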